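/- Let f : {0,1} × R^{N×N}_sym → [0,∞) satisfy linear growth α|ξ| ≤ f(q,ξ) ≤ β(1+|ξ|). Then the following two conditions are equivalent: (i) there exist 0 < γ ≤ 1 and C, L > 0 such that for all q, ξ and t > 0 with t|ξ| > L one has |f^∞(q,ξ) − f(q,tξ)/t| ≤ C |ξ|^{1−γ}/t^γ; (ii) there exist 0 < γ ≤ 1 and C > 0 such that |f^∞(q,ξ) − f(q,ξ)| ≤ C(1 + |ξ|^{1−γ}) for all q, ξ. -/
import Mathlib


open MeasureTheory Filter Topology Metric
open scoped RealInnerProductSpace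

noncomputable section

/-- The space of `N × N` real matrices (as functions). -/
abbrev Mat (N : ℕ) := Fin N → Fin N → ℝ

/-- The (Frobenius) norm of a matrix. -/
def matNorm {N : ℕ} (ξ : Mat N) : ℝ := Real.sqrt (∑ i, ∑ j, (ξ i j) ^ 2)

/-- A matrix is symmetric. -/
def IsSymMat {N : ℕ} (ξ : Mat N) : Prop := ∀ i j, ξ i j = ξ j i

/-- The recession function in the second variable:
`f^∞(q,ξ) := limsup_{t → +∞} f(q, tξ)/t`. -/
def rec1 {N : ℕ} (g : Mat N → ℝ) (ξ : Mat N) : ℝ :=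
  Filter.limsup (fun t : ℝ => g (t • ξ) / t) Filter.atTop

set_option linter.unusedSectionVars false
set_option linter.unusedVariables false

lemma matNorm_nonneg {N : ℕ} (ξ : Mat N) : 0 ≤ matNorm ξ := Real.sqrt_nonneg _

lemma matNorm_smul {N : ℕ} (t : ℝ) (ξ : Mat N) : matNorm (t • ξ) = |t| * matNorm ξ := by
  unfold matNorm
  have h : (∑ i, ∑ j, ((t • ξ) i j) ^ 2) = t ^ 2 * ∑ i, ∑ j, (ξ i j) ^ 2 := by
    simp_rw [Pi.smul_apply, smul_eq_mul, mul_pow, Finset.mul_sum]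
  rw [h, Real.sqrt_mul (sq_nonneg t), Real.sqrt_sq_eq_abs]

lemma isSymMat_smul {N : ℕ} {ξ : Mat N} (hξ : IsSymMat ξ) (t : ℝ) : IsSymMat (t • ξ) := by
  intro i j
  simp only [Pi.smul_apply, smul_eq_mul, hξ i j]

section bounds

variable {N : ℕ} {β : ℝ} (hβ : 0 ≤ β) (g : Mat N → ℝ)
  (hg0 : ∀ ξ', 0 ≤ g ξ')
  (hg : ∀ ξ', IsSymMat ξ' → g ξ' ≤ β * (1 + matNorm ξ'))
  {ξ : Mat N} (hξ : IsSymMat ξ)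

include hβ hg0 hg hξ in
lemma ev_ub : ∀ᶠ s : ℝ in atTop, g (s • ξ) / s ≤ β * (1 + matNorm ξ) := by
  filter_upwards [eventually_ge_atTop (1 : ℝ)] with s hs
  have hs0 : 0 < s := lt_of_lt_of_le one_pos hs
  have h1 : g (s • ξ) ≤ β * (1 + s * matNorm ξ) := by
    have := hg (s • ξ) (isSymMat_smul hξ s)
    rwa [matNorm_smul, abs_of_pos hs0] at this
  rw [div_le_iff₀ hs0]
  have hmn := matNorm_nonneg ξ
  nlinarith

include hg0 in
lemma ev_nn : ∀ᶠ s : ℝ in atTop, 0 ≤ g (s • ξ) / s := by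
  filter_upwards [eventually_ge_atTop (1 : ℝ)] with s hs
  exact div_nonneg (hg0 _) (le_trans zero_le_one hs)

include hβ hg0 hg hξ in
lemma rec1_le : rec1 g ξ ≤ β * (1 + matNorm ξ) :=
  Filter.limsup_le_of_le (isCoboundedUnder_le_of_eventually_le _ (ev_nn g hg0 (ξ := ξ)))
    (ev_ub hβ g hg0 hg hξ)

include hβ hg0 hg hξ in
lemma rec1_nonneg : 0 ≤ rec1 g ξ :=
  Filter.le_limsup_of_frequently_le ((ev_nn g hg0 (ξ := ξ)).frequently)
    ⟨β * (1 + matNorm ξ), eventually_map.mpr (ev_ub hβ g hg0 hg hξ)⟩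

include hβ hg0 hg hξ in
lemma rec1_smul {t : ℝ} (ht : 0 < t) : rec1 g (t • ξ) = t * rec1 g ξ := by
  have hfun : (fun s : ℝ => g (s • (t • ξ)) / s)
      = (fun u : ℝ => t * (g (u • ξ) / u)) ∘ (fun s : ℝ => s * t) := by
    funext s
    rcases eq_or_ne s 0 with rfl | hs
    · simp
    · simp only [Function.comp_apply, smul_smul]
      rw [eq_comm]
      field_simp
  have hmap : Filter.map (fun s : ℝ => s * t) Filter.atTop = Filter.atTop :=
    (OrderIso.mulRight₀ t ht).map_atTop
  have hcomp : Filter.limsup ((fun u : ℝ => t * (g (u • ξ) / u)) ∘ fun s : ℝ => s * t)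
      Filter.atTop = Filter.limsup (fun u : ℝ => t * (g (u • ξ) / u)) Filter.atTop := by
    conv_rhs => rw [← hmap]
    unfold Filter.limsup
    rw [← Filter.map_map]
  have hub := ev_ub hβ g hg0 hg hξ
  have hnn := ev_nn g hg0 (ξ := ξ)
  have hbd : Filter.IsBoundedUnder (· ≤ ·) Filter.atTop (fun u : ℝ => g (u • ξ) / u) :=
    ⟨β * (1 + matNorm ξ), eventually_map.mpr hub⟩
  have hcb : Filter.IsCoboundedUnder (· ≤ ·) Filter.atTop (fun u : ℝ => g (u • ξ) / u) :=
    isCoboundedUnder_le_of_eventually_le _ hnn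
  have hbd2 : Filter.IsBoundedUnder (· ≤ ·) Filter.atTop
      (fun u : ℝ => t * (g (u • ξ) / u)) := by
    refine ⟨t * (β * (1 + matNorm ξ)), eventually_map.mpr ?_⟩
    filter_upwards [hub] with s hs
    exact mul_le_mul_of_nonneg_left hs ht.le
  have hcb2 : Filter.IsCoboundedUnder (· ≤ ·) Filter.atTop
      (fun u : ℝ => t * (g (u • ξ) / u)) := by
    refine isCoboundedUnder_le_of_eventually_le _ (x := 0) ?_
    filter_upwards [hnn] with s hs
    exact mul_nonneg ht.le hs
  have e := (OrderIso.mulLeft₀ t ht).limsup_apply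
    (u := fun u : ℝ => g (u • ξ) / u) (f := Filter.atTop) hbd hcb hbd2 hcb2
  simp only [OrderIso.mulLeft₀_apply] at e
  unfold rec1
  rw [hfun, hcomp, ← e]

end bounds

/-- under linear growth, the two forms of the strengthened recession
hypothesis are equivalent: the rate condition for `t|ξ| > L` and the global bound
`|f^∞(q,ξ) - f(q,ξ)| ≤ C(1 + |ξ|^{1-γ})`. -/
theorem statement3 {N : ℕ} (hN : 0 < N) (f : ℝ → Mat N → ℝ) (α β : ℝ)
    (hα : 0 < α) (hαβ : α ≤ β)
    (hf0 : ∀ q ξ, 0 ≤ f q ξ)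
    (hgrowth : ∀ q ∈ ({0, 1} : Set ℝ), ∀ ξ : Mat N, IsSymMat ξ →
      α * matNorm ξ ≤ f q ξ ∧ f q ξ ≤ β * (1 + matNorm ξ)) :
    (∃ γ C L : ℝ, 0 < γ ∧ γ ≤ 1 ∧ 0 < C ∧ 0 < L ∧
      ∀ q ∈ ({0, 1} : Set ℝ), ∀ ξ : Mat N, IsSymMat ξ → ∀ t : ℝ, 0 < t →
        L < t * matNorm ξ →
        |rec1 (f q) ξ - f q (t • ξ) / t| ≤ C * matNorm ξ ^ (1 - γ) / t ^ γ) ↔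
    (∃ γ C : ℝ, 0 < γ ∧ γ ≤ 1 ∧ 0 < C ∧
      ∀ q ∈ ({0, 1} : Set ℝ), ∀ ξ : Mat N, IsSymMat ξ →
        |rec1 (f q) ξ - f q ξ| ≤ C * (1 + matNorm ξ ^ (1 - γ))) := by
  have hβ : 0 ≤ β := le_trans hα.le hαβ
  constructor
  · rintro ⟨γ, C, L, hγ, hγ1, hC, hL, H⟩
    refine ⟨γ, C + β * (1 + L), hγ, hγ1, by positivity, ?_⟩
    intro q hq ξ hξ
    have hub := fun ξ' hξ' => (hgrowth q hq ξ' hξ').2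
    have hx : (0:ℝ) ≤ matNorm ξ ^ (1 - γ) := Real.rpow_nonneg (matNorm_nonneg ξ) _
    rcases le_or_gt (matNorm ξ) L with hle | hlt
    · have h1 : rec1 (f q) ξ ≤ β * (1 + matNorm ξ) := rec1_le hβ (f q) (hf0 q) hub hξ
      have h2 : 0 ≤ rec1 (f q) ξ := rec1_nonneg hβ (f q) (hf0 q) hub hξ
      have h3 : f q ξ ≤ β * (1 + matNorm ξ) := hub ξ hξ
      have h4 : 0 ≤ f q ξ := hf0 q ξ
      rw [abs_le]
      have hb1 : (0:ℝ) ≤ β * (L - matNorm ξ) := mul_nonneg hβ (by linarith)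
      have hb2 : (0:ℝ) ≤ C * matNorm ξ ^ (1 - γ) := mul_nonneg hC.le hx
      have hb3 : (0:ℝ) ≤ β * (1 + L) * matNorm ξ ^ (1 - γ) := by positivity
      constructor <;> nlinarith
    · have := H q hq ξ hξ 1 one_pos (by simpa using hlt)
      rw [one_smul, div_one, Real.one_rpow, div_one] at this
      calc |rec1 (f q) ξ - f q ξ| ≤ C * matNorm ξ ^ (1 - γ) := this
        _ ≤ (C + β * (1 + L)) * (1 + matNorm ξ ^ (1 - γ)) := by
          have hb3 : (0:ℝ) ≤ β * (1 + L) * (1 + matNorm ξ ^ (1 - γ)) := by positivity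
          nlinarith
  · rintro ⟨γ, C, hγ, hγ1, hC, H⟩
    refine ⟨γ, 2 * C, 1, hγ, hγ1, by positivity, one_pos, ?_⟩
    intro q hq ξ hξ t ht hL
    have hub := fun ξ' hξ' => (hgrowth q hq ξ' hξ').2
    have hn : 0 ≤ matNorm ξ := matNorm_nonneg ξ
    have htn : (0:ℝ) < t * matNorm ξ := lt_trans one_pos hL
    have hsm : rec1 (f q) (t • ξ) = t * rec1 (f q) ξ :=
      rec1_smul hβ (f q) (hf0 q) hub hξ ht
    have h2 := H q hq (t • ξ) (isSymMat_smul hξ t)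
    rw [hsm, matNorm_smul, abs_of_pos ht] at h2
    have heq : rec1 (f q) ξ - f q (t • ξ) / t
        = (t * rec1 (f q) ξ - f q (t • ξ)) / t := by
      rw [sub_div, mul_div_cancel_left₀ _ ht.ne']
    rw [heq, abs_div, abs_of_pos ht]
    have htγ : (0:ℝ) < t ^ γ := Real.rpow_pos_of_pos ht γ
    have hone : (1:ℝ) ≤ (t * matNorm ξ) ^ (1 - γ) := by
      calc (1:ℝ) = 1 ^ (1 - γ) := (Real.one_rpow _).symm
        _ ≤ (t * matNorm ξ) ^ (1 - γ) :=
          Real.rpow_le_rpow zero_le_one hL.le (by linarith)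
    have hkey : (t * matNorm ξ) ^ (1 - γ) / t = matNorm ξ ^ (1 - γ) / t ^ γ := by
      rw [Real.mul_rpow ht.le hn, Real.rpow_sub ht, Real.rpow_one]
      field_simp
    calc |t * rec1 (f q) ξ - f q (t • ξ)| / t
        ≤ C * (1 + (t * matNorm ξ) ^ (1 - γ)) / t := by
          exact (div_le_div_iff_of_pos_right ht).mpr h2
      _ ≤ 2 * C * ((t * matNorm ξ) ^ (1 - γ)) / t := by
          have : C * (1 + (t * matNorm ξ) ^ (1 - γ)) ≤ 2 * C * ((t * matNorm ξ) ^ (1 - γ)) := by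
            nlinarith
          exact (div_le_div_iff_of_pos_right ht).mpr this
      _ = 2 * C * (matNorm ξ ^ (1 - γ) / t ^ γ) := by
          rw [mul_div_assoc, hkey]
      _ = 2 * C * matNorm ξ ^ (1 - γ) / t ^ γ := by ring
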